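/- Let n, s, t be positive integers, r ≥ 2 an integer, α = ν_2(n), and suppose n ≡ 2^α (mod 2^{α+2}). Then in ℤ[q], ∑_{k=-n}^{n} (-1)^k q^{C(k,2)} [8n choose 4n+k]_q^r [4n choose 2n+k]_q^s [2n choose n+k]_q^t is divisible by Φ_{2^{α+3}}(q)^2 = (1 + q^{2^{α+2}})^2. -/

import Mathlib

open Finset Polynomial

/-- The Gaussian (q-)binomial coefficient as a polynomial in `ℤ[q]`,
defined by the q-Pascal recurrence. -/
noncomputable def qbinom : ℕ → ℕ → Polynomial ℤ
  | _, 0 => 1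
  | 0, _ + 1 => 0
  | n + 1, k + 1 => qbinom n k + X ^ (k + 1) * qbinom n (k + 1)

/-- Gaussian binomial with an integer lower argument, zero when it is negative. -/
noncomputable def qbinomZ (n : ℕ) (k : ℤ) : Polynomial ℤ := if 0 ≤ k then qbinom n k.toNat else 0

/-! ### Auxiliary lemmas -/

lemma qbinom_zero_right (n : ℕ) : qbinom n 0 = 1 := by cases n <;> rfl

lemma qbinom_succ_succ (n k : ℕ) :
    qbinom (n + 1) (k + 1) = qbinom n k + X ^ (k + 1) * qbinom n (k + 1) := rfl

lemma qbinom_eq_zero : ∀ {n k : ℕ}, n < k → qbinom n k = 0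
  | 0, _ + 1, _ => rfl
  | n + 1, k + 1, h => by
    rw [qbinom_succ_succ, qbinom_eq_zero (by omega), qbinom_eq_zero (by omega)]
    ring

/-- key q-Pascal consequence -/
lemma qbinom_mul_eq : ∀ (N K : ℕ),
    (X ^ (K + 1) - 1) * qbinom (N + 1) (K + 1) = (X ^ (N + 1) - 1) * qbinom N K := by
  intro N
  induction N with
  | zero =>
    intro K
    match K with
    | 0 => simp [qbinom_succ_succ, qbinom_zero_right, qbinom_eq_zero]
    | K + 1 => rw [qbinom_eq_zero (by omega), qbinom_eq_zero (by omega)]; ring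
  | succ N ih =>
    intro K
    match K with
    | 0 =>
      have h := ih 0
      rw [qbinom_zero_right, mul_one] at h
      rw [qbinom_zero_right, mul_one, qbinom_succ_succ, qbinom_zero_right]
      calc (X ^ (0 + 1) - 1) * (1 + X ^ (0 + 1) * qbinom (N + 1) (0 + 1))
          = (X ^ 1 - 1) + X * ((X ^ (0 + 1) - 1) * qbinom (N + 1) (0 + 1)) := by ring
        _ = (X ^ 1 - 1) + X * (X ^ (N + 1) - 1) := by rw [h]
        _ = X ^ (N + 1 + 1) - 1 := by ring
    | K + 1 =>
      have h1 := ih K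
      have h2 := ih (K + 1)
      rw [qbinom_succ_succ (N + 1) (K + 1), qbinom_succ_succ N K] at *
      linear_combination X * h1 + X ^ (K + 1 + 1) * h2

noncomputable def qfac (m : ℕ) : Polynomial ℤ := ∏ i ∈ Finset.range m, (X ^ (i + 1) - 1)

lemma qfac_succ (m : ℕ) : qfac (m + 1) = qfac m * (X ^ (m + 1) - 1) := by
  rw [qfac, qfac, Finset.prod_range_succ]

lemma qfac_monic (m : ℕ) : (qfac m).Monic := by
  apply Polynomial.monic_prod_of_monic
  intro i _
  simpa using Polynomial.monic_X_pow_sub_C (1 : ℤ) (Nat.succ_ne_zero i)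

lemma qfac_ne_zero (m : ℕ) : qfac m ≠ 0 := (qfac_monic m).ne_zero

lemma qbinom_mul_qfac : ∀ (K N : ℕ), K ≤ N →
    qbinom N K * (qfac K * qfac (N - K)) = qfac N := by
  intro K
  induction K with
  | zero =>
    intro N _
    simp [qbinom_zero_right, qfac]
  | succ K ih =>
    intro N hKN
    obtain ⟨N', rfl⟩ : ∃ N', N = N' + 1 := ⟨N - 1, by omega⟩
    have hK : K ≤ N' := by omega
    have h := ih N' hK
    have hB := qbinom_mul_eq N' K
    have hsub : N' + 1 - (K + 1) = N' - K := by omega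
    rw [hsub, qfac_succ, qfac_succ]
    calc qbinom (N' + 1) (K + 1) * (qfac K * (X ^ (K + 1) - 1) * qfac (N' - K))
        = ((X ^ (K + 1) - 1) * qbinom (N' + 1) (K + 1)) * (qfac K * qfac (N' - K)) := by ring
      _ = ((X ^ (N' + 1) - 1) * qbinom N' K) * (qfac K * qfac (N' - K)) := by rw [hB]
      _ = (qbinom N' K * (qfac K * qfac (N' - K))) * (X ^ (N' + 1) - 1) := by ring
      _ = qfac N' * (X ^ (N' + 1) - 1) := by rw [h]

lemma qbinom_symm {N K : ℕ} (h : K ≤ N) : qbinom N K = qbinom N (N - K) := by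
  have h1 := qbinom_mul_qfac K N h
  have h2 := qbinom_mul_qfac (N - K) N (by omega)
  rw [show N - (N - K) = K by omega] at h2
  have hne : qfac K * qfac (N - K) ≠ 0 :=
    mul_ne_zero (qfac_ne_zero _) (qfac_ne_zero _)
  apply mul_right_cancel₀ hne
  rw [h1, mul_comm (qfac K), h2]

lemma cyclotomic_prime : ∀ {d : ℕ}, 0 < d → Prime (cyclotomic d ℤ) := fun hd =>
  (UniqueFactorizationMonoid.irreducible_iff_prime).mp (Polynomial.cyclotomic.irreducible hd)

lemma cyclotomic_not_dvd_X_pow_sub_one {d N : ℕ} (hd : 0 < d) (hN : ¬ d ∣ N) :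
    ¬ (cyclotomic d ℤ ∣ (X ^ N - 1 : Polynomial ℤ)) := by
  intro hdvd
  set ζ : ℂ := Complex.exp (2 * Real.pi * Complex.I / d)
  have hζ : IsPrimitiveRoot ζ d := Complex.isPrimitiveRoot_exp d hd.ne'
  obtain ⟨g, hg⟩ := hdvd
  have hz : (Polynomial.aeval ζ) (cyclotomic d ℤ) = 0 := by
    rw [Polynomial.aeval_def, Polynomial.eval₂_eq_eval_map, Polynomial.map_cyclotomic]
    exact hζ.isRoot_cyclotomic hd
  have := congrArg (Polynomial.aeval ζ) hg
  rw [map_mul, hz, zero_mul, map_sub, map_pow, Polynomial.aeval_X, map_one,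
    sub_eq_zero] at this
  exact hN ((hζ.pow_eq_one_iff_dvd N).mp this)

lemma cyclotomic_sq_not_dvd_X_pow_sub_one {d N : ℕ} (hd : 0 < d) (hN : 0 < N) :
    ¬ ((cyclotomic d ℤ) ^ 2 ∣ (X ^ N - 1 : Polynomial ℤ)) := by
  intro h
  have h2 : (cyclotomic d ℚ) ^ 2 ∣ (X ^ N - 1 : Polynomial ℚ) := by
    have := Polynomial.map_dvd (Int.castRingHom ℚ) h
    simpa [Polynomial.map_pow, Polynomial.map_cyclotomic, Polynomial.map_sub,
      Polynomial.map_one] using this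
  have hsep : (X ^ N - 1 : Polynomial ℚ).Separable :=
    Polynomial.X_pow_sub_one_separable_iff.mpr (by exact_mod_cast Nat.cast_ne_zero.mpr hN.ne')
  have hsq : Squarefree (X ^ N - 1 : Polynomial ℚ) := hsep.squarefree
  have := hsq (cyclotomic d ℚ) (by rwa [← sq])
  exact (Polynomial.cyclotomic.irreducible_rat hd).not_isUnit this

lemma qfac_factor {d : ℕ} (hd : 0 < d) :
    ∀ M : ℕ, ∃ g : Polynomial ℤ, qfac M = (cyclotomic d ℤ) ^ (M / d) * g ∧
      ¬ cyclotomic d ℤ ∣ g := by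
  intro M
  induction M with
  | zero =>
    refine ⟨1, by simp [qfac], ?_⟩
    intro h
    exact (Polynomial.cyclotomic.irreducible hd).not_isUnit (isUnit_of_dvd_one h)
  | succ M ih =>
    obtain ⟨g, hg, hng⟩ := ih
    have hsuccdiv := @Nat.succ_div M d
    by_cases hdvd : d ∣ M + 1
    · have hPdvd : cyclotomic d ℤ ∣ (X ^ (M + 1) - 1 : Polynomial ℤ) := by
        obtain ⟨c, hc⟩ := hdvd
        calc cyclotomic d ℤ ∣ (X ^ d - 1 : Polynomial ℤ) := Polynomial.cyclotomic.dvd_X_pow_sub_one d ℤ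
          _ ∣ (X ^ (M + 1) - 1 : Polynomial ℤ) := by
            rw [hc, pow_mul]
            simpa using sub_dvd_pow_sub_pow ((X : Polynomial ℤ) ^ d) 1 c
      obtain ⟨h, hh⟩ := hPdvd
      have hnh : ¬ cyclotomic d ℤ ∣ h := by
        intro hcon
        obtain ⟨w, hw⟩ := hcon
        apply cyclotomic_sq_not_dvd_X_pow_sub_one hd (Nat.succ_pos M) (N := M + 1)
        exact ⟨w, by rw [hh, hw]; ring⟩
      refine ⟨g * h, ?_, ?_⟩
      · rw [qfac_succ, hg, hh, hsuccdiv, if_pos hdvd, pow_succ]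
        ring
      · intro hcon
        rcases (cyclotomic_prime hd).dvd_mul.mp hcon with h' | h'
        · exact hng h'
        · exact hnh h'
    · refine ⟨g * (X ^ (M + 1) - 1), ?_, ?_⟩
      · rw [qfac_succ, hg, hsuccdiv, if_neg hdvd]
        ring
      · intro hcon
        rcases (cyclotomic_prime hd).dvd_mul.mp hcon with h' | h'
        · exact hng h'
        · exact cyclotomic_not_dvd_X_pow_sub_one hd hdvd h'

lemma add_div_of_carry {d K L : ℕ} (hd : 0 < d) (h : d ≤ K % d + L % d) :
    (K + L) / d = K / d + L / d + 1 := by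
  have h1 := Nat.div_add_mod K d
  have h2 := Nat.div_add_mod L d
  have hK := Nat.mod_lt K hd
  have hL := Nat.mod_lt L hd
  have e2 : d * (K / d + L / d + 1) = d * (K / d) + d * (L / d) + d := by ring
  have e : K + L = d * (K / d + L / d + 1) + (K % d + L % d - d) := by
    rw [e2]; omega
  have hz : (K % d + L % d - d) / d = 0 := Nat.div_eq_of_lt (by omega)
  calc (K + L) / d = (d * (K / d + L / d + 1) + (K % d + L % d - d)) / d := by rw [← e]
    _ = K / d + L / d + 1 + (K % d + L % d - d) / d := Nat.mul_add_div hd _ _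
    _ = K / d + L / d + 1 := by rw [hz, add_zero]

lemma cyclotomic_dvd_qbinom {d N K : ℕ} (hd : 0 < d) (hKN : K ≤ N)
    (hcarry : d ≤ K % d + (N - K) % d) : cyclotomic d ℤ ∣ qbinom N K := by
  have hP : Prime (cyclotomic d ℤ) := cyclotomic_prime hd
  obtain ⟨g1, hg1, hn1⟩ := qfac_factor hd K
  obtain ⟨g2, hg2, hn2⟩ := qfac_factor hd (N - K)
  obtain ⟨g3, hg3, hn3⟩ := qfac_factor hd N
  have hA := qbinom_mul_qfac K N hKN
  rw [hg1, hg2, hg3] at hA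
  have hdiv : N / d = K / d + (N - K) / d + 1 := by
    have := add_div_of_carry hd hcarry
    rwa [Nat.add_sub_cancel' hKN] at this
  rw [hdiv] at hA
  have hc : (cyclotomic d ℤ) ^ (K / d + (N - K) / d) * (qbinom N K * (g1 * g2))
      = (cyclotomic d ℤ) ^ (K / d + (N - K) / d) * (cyclotomic d ℤ * g3) := by
    linear_combination hA
  have hmain := mul_left_cancel₀ (pow_ne_zero _ hP.ne_zero) hc
  have hdvd : cyclotomic d ℤ ∣ qbinom N K * (g1 * g2) := ⟨g3, hmain⟩
  rcases hP.dvd_mul.mp hdvd with h' | h'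
  · exact h'
  · rcases hP.dvd_mul.mp h' with h'' | h''
    · exact absurd h'' hn1
    · exact absurd h'' hn2

lemma carry_of {d x y : ℕ} (h : (x + y) % d < x % d) : d ≤ x % d + y % d := by
  by_contra hlt
  push_neg at hlt
  have : (x + y) % d = x % d + y % d := by
    rw [Nat.add_mod, Nat.mod_eq_of_lt hlt]
  omega

lemma sum_pair (n : ℕ) (F : ℤ → Polynomial ℤ) :
    ∑ k ∈ Finset.Icc (-(n : ℤ)) (n : ℤ), F k
      = F 0 + ∑ j ∈ Finset.Icc (1 : ℤ) (n : ℤ), (F j + F (-j)) := by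
  rw [Finset.sum_add_distrib]
  have h1 : Finset.Icc (-(n : ℤ)) (n : ℤ)
      = Finset.Icc (-(n : ℤ)) (-1) ∪ Finset.Icc (0 : ℤ) (n : ℤ) := by
    ext x
    simp only [Finset.mem_Icc, Finset.mem_union]
    omega
  have h2 : Disjoint (Finset.Icc (-(n : ℤ)) (-1)) (Finset.Icc (0 : ℤ) (n : ℤ)) := by
    rw [Finset.disjoint_left]
    intro x hx hx'
    simp only [Finset.mem_Icc] at hx hx'
    omega
  rw [h1, Finset.sum_union h2]
  have h3 : ∑ k ∈ Finset.Icc (-(n : ℤ)) (-1), F k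
      = ∑ j ∈ Finset.Icc (1 : ℤ) (n : ℤ), F (-j) := by
    have hmap : Finset.Icc (-(n : ℤ)) (-1)
        = (Finset.Icc (1 : ℤ) (n : ℤ)).map ⟨fun x => -x, neg_injective⟩ := by
      ext x
      simp only [Finset.mem_Icc, Finset.mem_map, Function.Embedding.coeFn_mk]
      constructor
      · intro hx; exact ⟨-x, by omega, by ring⟩
      · rintro ⟨y, hy, rfl⟩; omega
    rw [hmap, Finset.sum_map]
    rfl
  have h4 : Finset.Icc (0 : ℤ) (n : ℤ) = insert 0 (Finset.Icc (1 : ℤ) (n : ℤ)) := by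
    ext x
    simp only [Finset.mem_Icc, Finset.mem_insert]
    omega
  rw [h3, h4, Finset.sum_insert (by simp)]
  ring

theorem stmt19 (n r s t : ℕ) (hn : 0 < n) (hr : 2 ≤ r) (hs : 0 < s) (ht : 0 < t)
    (hcong : n ≡ 2 ^ (padicValNat 2 n) [MOD 2 ^ (padicValNat 2 n + 2)]) :
    Polynomial.cyclotomic (2 ^ (padicValNat 2 n + 3)) ℤ ^ 2 ∣
      ∑ k ∈ Finset.Icc (-(n : ℤ)) (n : ℤ),
        Polynomial.C (k.negOnePow : ℤ) * X ^ (k * (k - 1) / 2).toNat *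
          qbinomZ (8 * n) (4 * (n : ℤ) + k) ^ r *
          qbinomZ (4 * n) (2 * (n : ℤ) + k) ^ s *
          qbinomZ (2 * n) ((n : ℤ) + k) ^ t := by
  set a := padicValNat 2 n with ha
  set e := 2 ^ a with he'
  have he : 0 < e := pow_pos (by norm_num) a
  have hdpos : 0 < 2 ^ (a + 3) := pow_pos (by norm_num) _
  have h4 : 2 ^ (a + 2) = 4 * e := by rw [he', pow_add]; ring
  have h8 : 2 ^ (a + 3) = 8 * e := by rw [he', pow_add]; ring
  have hm : n % (4 * e) = e := by
    have h := hcong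
    rw [Nat.ModEq] at h
    rw [← h4, h]
    exact Nat.mod_eq_of_lt (by omega)
  obtain ⟨v, hv⟩ : ∃ v, n = 4 * e * v + e := by
    refine ⟨n / (4 * e), ?_⟩
    have hdm := Nat.div_add_mod n (4 * e)
    omega
  have h4n : (4 * n) % (2 ^ (a + 3)) = 4 * e := by
    have h1 : 4 * n = 8 * e * (2 * v) + 4 * e := by rw [hv]; ring
    rw [h8, h1, Nat.mul_add_mod, Nat.mod_eq_of_lt (by omega)]
  -- key A : non-exceptional columns
  have hA : ∀ j : ℕ, j ≤ n → ¬ (2 ^ (a + 3) ∣ 4 * n + j) →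
      cyclotomic (2 ^ (a + 3)) ℤ ∣ qbinom (8 * n) (4 * n + j) := by
    intro j hj hnd
    apply cyclotomic_dvd_qbinom hdpos (by omega)
    have hsub : 8 * n - (4 * n + j) = 4 * n - j := by omega
    rw [hsub]
    apply carry_of
    have h8n : 2 ^ (a + 3) ∣ 8 * n := by
      rw [h8]; exact ⟨4 * v + 1, by rw [hv]; ring⟩
    have h0 : (4 * n + j + (4 * n - j)) % (2 ^ (a + 3)) = 0 := by
      obtain ⟨c, hc⟩ := h8n
      rw [show 4 * n + j + (4 * n - j) = 8 * n by omega, hc, Nat.mul_mod_right]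
    have h1 : (4 * n + j) % (2 ^ (a + 3)) ≠ 0 := by
      intro hcon
      exact hnd (Nat.dvd_of_mod_eq_zero hcon)
    omega
  -- exceptional columns: residue of j
  have hj4 : ∀ j : ℕ, (2 ^ (a + 3) ∣ 4 * n + j) → ∃ c, j = 8 * e * c + 4 * e := by
    intro j hdv
    rw [h8] at hdv
    obtain ⟨w, hw⟩ := hdv
    have h4n' : 4 * n = 8 * e * (2 * v) + 4 * e := by rw [hv]; ring
    have hlt : 2 * v < w := by
      have h1 : 8 * e * (2 * v) < 8 * e * w := by omega
      exact Nat.lt_of_mul_lt_mul_left h1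
    obtain ⟨c, rfl⟩ : ∃ c, w = 2 * v + 1 + c := ⟨w - (2 * v + 1), by omega⟩
    refine ⟨c, ?_⟩
    have hexp : 8 * e * (2 * v + 1 + c) = 8 * e * (2 * v) + 8 * e + 8 * e * c := by ring
    omega
  have hPform : cyclotomic (2 ^ (a + 3)) ℤ = X ^ (4 * e) + 1 := by
    have hg := Polynomial.cyclotomic_prime_pow_eq_geom_sum (R := ℤ) (p := 2) (n := a + 2)
      Nat.prime_two
    rw [show a + 3 = a + 2 + 1 from rfl, hg, Finset.sum_range_succ, Finset.sum_range_one,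
      pow_zero, pow_one, h4]
    ring
  have hB1 : ∀ j : ℕ, (2 ^ (a + 3) ∣ 4 * n + j) →
      cyclotomic (2 ^ (a + 3)) ℤ ∣ (1 + X ^ j : Polynomial ℤ) := by
    intro j hdv
    obtain ⟨c, hc⟩ := hj4 j hdv
    rw [hPform, hc]
    have hx : (X : Polynomial ℤ) ^ (8 * e * c + 4 * e) = ((X ^ (8 * e)) ^ c) * X ^ (4 * e) := by
      rw [pow_add, pow_mul]
    rw [hx]
    have hmid : (X ^ (4 * e) + 1 : Polynomial ℤ) ∣ (X : Polynomial ℤ) ^ (8 * e) - 1 :=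
      ⟨X ^ (4 * e) - 1, by rw [show 8 * e = 4 * e + 4 * e by ring, pow_add]; ring⟩
    have hdvd1 : (X ^ (4 * e) + 1 : Polynomial ℤ) ∣ ((X : Polynomial ℤ) ^ (8 * e)) ^ c - 1 :=
      hmid.trans (by simpa using sub_dvd_pow_sub_pow ((X : Polynomial ℤ) ^ (8 * e)) 1 c)
    have hsplit : (1 + ((X : Polynomial ℤ) ^ (8 * e)) ^ c * X ^ (4 * e))
        = (X ^ (4 * e) + 1) + X ^ (4 * e) * (((X : Polynomial ℤ) ^ (8 * e)) ^ c - 1) := by ring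
    rw [hsplit]
    exact dvd_add dvd_rfl (Dvd.dvd.mul_left hdvd1 _)
  have hB2 : ∀ j : ℕ, j ≤ n → (2 ^ (a + 3) ∣ 4 * n + j) →
      cyclotomic (2 ^ (a + 3)) ℤ ∣ qbinom (4 * n) (2 * n + j) := by
    intro j hj hdv
    obtain ⟨c, hc⟩ := hj4 j hdv
    apply cyclotomic_dvd_qbinom hdpos (by omega)
    have hsub : 4 * n - (2 * n + j) = 2 * n - j := by omega
    rw [hsub]
    apply carry_of
    have hxy : 2 * n + j + (2 * n - j) = 4 * n := by omega
    rw [hxy, h4n]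
    have hx : (2 * n + j) % (2 ^ (a + 3)) = 6 * e := by
      have h1 : 2 * n + j = 8 * e * (v + c) + 6 * e := by rw [hv, hc]; ring
      rw [h8, h1, Nat.mul_add_mod, Nat.mod_eq_of_lt (by omega)]
    rw [hx]
    omega
  -- power-of-P divisibility from a single factor when r ≥ 2
  have hpow2 : ∀ (Q : Polynomial ℤ), cyclotomic (2 ^ (a + 3)) ℤ ∣ Q →
      cyclotomic (2 ^ (a + 3)) ℤ ^ 2 ∣ Q ^ r := by
    intro Q hQ
    calc cyclotomic (2 ^ (a + 3)) ℤ ^ 2 ∣ Q ^ 2 := pow_dvd_pow_of_dvd hQ 2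
      _ ∣ Q ^ r := pow_dvd_pow Q hr
  rw [sum_pair n]
  apply dvd_add
  · -- central term k = 0
    have hq : qbinomZ (8 * n) (4 * (n : ℤ) + 0) = qbinom (8 * n) (4 * n) := by
      rw [qbinomZ, if_pos (by positivity), show (4 * (n : ℤ) + 0).toNat = 4 * n by omega]
    have hnd : ¬ (2 ^ (a + 3) ∣ 4 * n + 0) := by
      intro hdv
      obtain ⟨c, hc⟩ := hdv
      have h0 : (4 * n) % (2 ^ (a + 3)) = 0 := by
        rw [show 4 * n = 2 ^ (a + 3) * c by omega]
        exact Nat.mul_mod_right _ _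
      omega
    have hP2 : cyclotomic (2 ^ (a + 3)) ℤ ^ 2 ∣ qbinomZ (8 * n) (4 * (n : ℤ) + 0) ^ r := by
      rw [hq]
      exact hpow2 _ (by simpa using hA 0 (by omega) hnd)
    exact ((hP2.mul_left _).mul_right _).mul_right _
  · apply Finset.dvd_sum
    intro j hjmem
    simp only [Finset.mem_Icc] at hjmem
    obtain ⟨hj1, hj2⟩ := hjmem
    set j' : ℕ := j.toNat with hj'
    have hjeq : (j' : ℤ) = j := Int.toNat_of_nonneg (by omega)
    have hj'1 : 1 ≤ j' := by omega
    have hj'n : j' ≤ n := by omega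
    -- rewrite the six q-binomials
    have hq1 : qbinomZ (8 * n) (4 * (n : ℤ) + j) = qbinom (8 * n) (4 * n + j') := by
      rw [qbinomZ, if_pos (by omega), show (4 * (n : ℤ) + j).toNat = 4 * n + j' by omega]
    have hq1' : qbinomZ (8 * n) (4 * (n : ℤ) + -j) = qbinom (8 * n) (4 * n + j') := by
      rw [qbinomZ, if_pos (by omega), show (4 * (n : ℤ) + -j).toNat = 4 * n - j' by omega,
        qbinom_symm (show 4 * n - j' ≤ 8 * n by omega),
        show 8 * n - (4 * n - j') = 4 * n + j' by omega]
    have hq2 : qbinomZ (4 * n) (2 * (n : ℤ) + j) = qbinom (4 * n) (2 * n + j') := by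
      rw [qbinomZ, if_pos (by omega), show (2 * (n : ℤ) + j).toNat = 2 * n + j' by omega]
    have hq2' : qbinomZ (4 * n) (2 * (n : ℤ) + -j) = qbinom (4 * n) (2 * n + j') := by
      rw [qbinomZ, if_pos (by omega), show (2 * (n : ℤ) + -j).toNat = 2 * n - j' by omega,
        qbinom_symm (show 2 * n - j' ≤ 4 * n by omega),
        show 4 * n - (2 * n - j') = 2 * n + j' by omega]
    have hq3 : qbinomZ (2 * n) ((n : ℤ) + j) = qbinom (2 * n) (n + j') := by
      rw [qbinomZ, if_pos (by omega), show ((n : ℤ) + j).toNat = n + j' by omega]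
    have hq3' : qbinomZ (2 * n) ((n : ℤ) + -j) = qbinom (2 * n) (n + j') := by
      rw [qbinomZ, if_pos (by omega), show ((n : ℤ) + -j).toNat = n - j' by omega,
        qbinom_symm (show n - j' ≤ 2 * n by omega),
        show 2 * n - (n - j') = n + j' by omega]
    have hxp : ((-j) * ((-j) - 1) / 2).toNat = (j * (j - 1) / 2).toNat + j' := by
      obtain ⟨u, hu⟩ := Int.even_mul_succ_self (j - 1)
      have h1 : j * (j - 1) = 2 * u := by linear_combination hu
      have h2 : (-j) * ((-j) - 1) = 2 * u + 2 * j := by linear_combination hu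
      have hu0 : 0 ≤ u := by nlinarith
      rw [h1, h2]
      omega
    -- combine the pair
    have hpair : C ((j.negOnePow : ℤ)) * X ^ (j * (j - 1) / 2).toNat *
          qbinomZ (8 * n) (4 * (n : ℤ) + j) ^ r *
          qbinomZ (4 * n) (2 * (n : ℤ) + j) ^ s *
          qbinomZ (2 * n) ((n : ℤ) + j) ^ t +
        C (((-j).negOnePow : ℤ)) * X ^ ((-j) * ((-j) - 1) / 2).toNat *
          qbinomZ (8 * n) (4 * (n : ℤ) + -j) ^ r *
          qbinomZ (4 * n) (2 * (n : ℤ) + -j) ^ s *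
          qbinomZ (2 * n) ((n : ℤ) + -j) ^ t
        = (1 + X ^ j') * (C ((j.negOnePow : ℤ)) * X ^ (j * (j - 1) / 2).toNat *
            qbinom (8 * n) (4 * n + j') ^ r *
            qbinom (4 * n) (2 * n + j') ^ s *
            qbinom (2 * n) (n + j') ^ t) := by
      rw [hq1, hq1', hq2, hq2', hq3, hq3', hxp, Int.negOnePow_neg, pow_add]
      ring
    rw [hpair]
    by_cases hD : 2 ^ (a + 3) ∣ 4 * n + j'
    · have hP1 := hB1 j' hD
      have hP2 := hB2 j' hj'n hD
      have hFj : cyclotomic (2 ^ (a + 3)) ℤ ∣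
          C ((j.negOnePow : ℤ)) * X ^ (j * (j - 1) / 2).toNat *
            qbinom (8 * n) (4 * n + j') ^ r *
            qbinom (4 * n) (2 * n + j') ^ s *
            qbinom (2 * n) (n + j') ^ t :=
        ((dvd_pow hP2 hs.ne').mul_left _).mul_right _
      rw [pow_two]
      exact mul_dvd_mul hP1 hFj
    · have hP2 : cyclotomic (2 ^ (a + 3)) ℤ ^ 2 ∣ qbinom (8 * n) (4 * n + j') ^ r :=
        hpow2 _ (hA j' hj'n hD)
      exact (((hP2.mul_left _).mul_right _).mul_right _).mul_left _
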